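/- arXiv:1505.04688 — 6 statements merged into one kernel-verified Lean document; each statement's English description precedes it below -/
import Mathlib

section
/- For all integers j, k ∈ ℤ the following identities hold among monotone creation and annihilation operators on the monotone Fock space: a_k a_j a_j† = a_k if j < k and a_k a_j a_j† = 0 if j ≥ k; a_j a_j† a_k† = a_k† if j < k and a_j a_j† a_k† = 0 if j ≥ k. Moreover, if j ≤ k then a_j a_j† a_k = a_k and a_k† a_j a_j† = a_k†. -/
open scoped InnerProductSpace ComplexOrder
open ContinuousLinearMap Filter

noncomputable section

/-- The monotone Fock space `F_m = ℓ²(Finset ℤ)`, the Hilbert space of square-summable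
complex families indexed by the finite subsets of `ℤ`. -/
abbrev Fm : Type := lp (fun _ : Finset ℤ => ℂ) 2

/-- The canonical orthonormal basis vector `e_A`, for `A` a finite subset of `ℤ`;
`e ∅` is the vacuum vector `Ω`. -/
noncomputable def e (A : Finset ℤ) : Fm := lp.single 2 A 1

/-- `adag` is the family of monotone creation operators: `adag i` sends `e A` to
`e (A ∪ {i})` if `A = ∅` or `i < min A` (equivalently, `i < j` for all `j ∈ A`),
and to `0` otherwise. -/
def CreatesOn (adag : ℤ → (Fm →L[ℂ] Fm)) : Prop :=
  ∀ (i : ℤ) (A : Finset ℤ),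
    adag i (e A) = if ∀ j ∈ A, i < j then e (insert i A) else 0

/-- `a` is the family of monotone annihilation operators: `a i` sends `e A` to
`e (A \ {i})` if `A ≠ ∅` and `i = min A` (equivalently, `i ∈ A` and `i ≤ j` for all
`j ∈ A`), and to `0` otherwise. -/
def AnnihilatesOn (a : ℤ → (Fm →L[ℂ] Fm)) : Prop :=
  ∀ (i : ℤ) (A : Finset ℤ),
    a i (e A) = if i ∈ A ∧ ∀ j ∈ A, i ≤ j then e (A.erase i) else 0

/-! On basis vectors, `a j * adag j` fixes `e A` when `j < min A` (it inserts `j` and removes it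
again) and kills it otherwise, so it is the projection onto the span of those `e A`. Each identity
then reduces to comparing two such order conditions on a finite set `A`; checking on the `e A` is
enough because the operators are continuous and the `e A` span a dense subspace. -/

theorem ext_e {F : Type*} [AddCommMonoid F] [Module ℂ F] [TopologicalSpace F] [T2Space F]
    {T S : Fm →L[ℂ] F} (h : ∀ A, T (e A) = S (e A)) : T = S :=
  lp.ext_continuousLinearMap ENNReal.ofNat_ne_top fun A => ContinuousLinearMap.ext_ring (h A)

section MonotoneRelations

variable {a adag : ℤ → (Fm →L[ℂ] Fm)}

theorem annihilate_apply_e_of_lt (ha : AnnihilatesOn a) {k x : ℤ} {A : Finset ℤ} (hx : x ∈ A)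
    (hxk : x < k) : a k (e A) = 0 := by
  rw [ha, if_neg fun h => (h.2 x hx).not_gt hxk]

theorem annihilate_apply_e_of_notMem (ha : AnnihilatesOn a) {k : ℤ} {A : Finset ℤ}
    (hk : k ∉ A) : a k (e A) = 0 := by
  rw [ha, if_neg fun h => hk h.1]

theorem create_apply_e_of_le (hadag : CreatesOn adag) {k x : ℤ} {A : Finset ℤ} (hx : x ∈ A)
    (hxk : x ≤ k) : adag k (e A) = 0 := by
  rw [hadag, if_neg fun h => (h x hx).not_ge hxk]

theorem annihilate_mul_create_apply_e (ha : AnnihilatesOn a) (hadag : CreatesOn adag) (j : ℤ)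
    (A : Finset ℤ) : (a j * adag j) (e A) = if ∀ x ∈ A, j < x then e A else 0 := by
  rw [mul_apply_eq_comp, hadag]
  split_ifs with h
  · have hmin : j ∈ insert j A ∧ ∀ x ∈ insert j A, j ≤ x :=
      ⟨Finset.mem_insert_self j A,
        Finset.forall_mem_insert _ _ _ |>.2 ⟨le_rfl, fun x hx => (h x hx).le⟩⟩
    rw [ha, if_pos hmin, Finset.erase_insert fun hj => (h j hj).false]
  · exact map_zero _

theorem annihilate_mul_annihilate_mul_create_of_lt (ha : AnnihilatesOn a)
    (hadag : CreatesOn adag) {j k : ℤ} (hjk : j < k) : a k * a j * adag j = a k := by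
  refine ext_e fun A => ?_
  rw [mul_assoc, mul_apply_eq_comp, annihilate_mul_create_apply_e ha hadag]
  split_ifs with h
  · rfl
  · obtain ⟨x, hxA, hxj⟩ := not_forall₂.1 h
    rw [map_zero, annihilate_apply_e_of_lt ha hxA (by omega)]

theorem annihilate_mul_annihilate_mul_create_of_le (ha : AnnihilatesOn a)
    (hadag : CreatesOn adag) {j k : ℤ} (hkj : k ≤ j) : a k * a j * adag j = 0 := by
  refine ext_e fun A => ?_
  rw [mul_assoc, mul_apply_eq_comp, annihilate_mul_create_apply_e ha hadag]
  split_ifs with h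
  · exact annihilate_apply_e_of_notMem ha fun hk => (h k hk).not_ge hkj
  · exact map_zero _

theorem annihilate_mul_create_mul_create_of_lt (ha : AnnihilatesOn a)
    (hadag : CreatesOn adag) {j k : ℤ} (hjk : j < k) : a j * adag j * adag k = adag k := by
  refine ext_e fun A => ?_
  rw [mul_apply_eq_comp, hadag]
  split_ifs with h
  · rw [annihilate_mul_create_apply_e ha hadag, if_pos]
    exact Finset.forall_mem_insert _ _ _ |>.2 ⟨hjk, fun x hx => hjk.trans (h x hx)⟩
  · exact map_zero _

theorem annihilate_mul_create_mul_create_of_le (ha : AnnihilatesOn a)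
    (hadag : CreatesOn adag) {j k : ℤ} (hkj : k ≤ j) : a j * adag j * adag k = 0 := by
  refine ext_e fun A => ?_
  rw [mul_apply_eq_comp, hadag]
  split_ifs with h
  · rw [annihilate_mul_create_apply_e ha hadag, if_neg fun h' =>
      (h' k (Finset.mem_insert_self k A)).not_ge hkj]
    rfl
  · exact map_zero _

theorem annihilate_mul_create_mul_annihilate_of_le (ha : AnnihilatesOn a)
    (hadag : CreatesOn adag) {j k : ℤ} (hjk : j ≤ k) : a j * adag j * a k = a k := by
  refine ext_e fun A => ?_
  rw [mul_apply_eq_comp, ha]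
  split_ifs with h
  · rw [annihilate_mul_create_apply_e ha hadag, if_pos]
    intro x hx
    exact hjk.trans_lt <|
      (h.2 x (Finset.mem_of_mem_erase hx)).lt_of_ne (Finset.ne_of_mem_erase hx).symm
  · exact map_zero _

theorem create_mul_annihilate_mul_create_of_le (ha : AnnihilatesOn a)
    (hadag : CreatesOn adag) {j k : ℤ} (hjk : j ≤ k) : adag k * (a j * adag j) = adag k := by
  refine ext_e fun A => ?_
  rw [mul_apply_eq_comp, annihilate_mul_create_apply_e ha hadag]
  split_ifs with h
  · rfl
  · obtain ⟨x, hxA, hxj⟩ := not_forall₂.1 h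
    rw [map_zero, create_apply_e_of_le hadag hxA (by omega)]

end MonotoneRelations

/-- Lemma 4.2 (Lemma `lampi1`): for all `j, k ∈ ℤ`,
`a_k a_j a_j† = δ_{k)}(j) a_k`, `a_j a_j† a_k† = δ_{k)}(j) a_k†` (where `δ_{k)}(j) = 1`
if `j < k` and `0` otherwise), and, if `j ≤ k`, `a_j a_j† a_k = a_k` and
`a_k† a_j a_j† = a_k†`. -/
theorem monotone_basic_relations
    (a adag : ℤ → (Fm →L[ℂ] Fm))
    (ha : AnnihilatesOn a) (hadag : CreatesOn adag) (j k : ℤ) :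
    (j < k → a k * a j * adag j = a k) ∧
    (j ≥ k → a k * a j * adag j = 0) ∧
    (j < k → a j * adag j * adag k = adag k) ∧
    (j ≥ k → a j * adag j * adag k = 0) ∧
    (j ≤ k → a j * adag j * a k = a k) ∧
    (j ≤ k → adag k * (a j * adag j) = adag k) :=
  ⟨annihilate_mul_annihilate_mul_create_of_lt ha hadag,
    annihilate_mul_annihilate_mul_create_of_le ha hadag,
    annihilate_mul_create_mul_create_of_lt ha hadag,
    annihilate_mul_create_mul_create_of_le ha hadag,
    annihilate_mul_create_mul_annihilate_of_le ha hadag,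
    create_mul_annihilate_mul_create_of_le ha hadag⟩

end
end

section
/- For every vector ξ ∈ F_m, the family (a_k† a_k ξ)_{k ∈ ℤ} is summable in F_m and ∑_{k ∈ ℤ} a_k† a_k ξ = ξ − ⟨ξ, Ω⟩ Ω; equivalently, the net of finite partial sums ∑_{k} a_k† a_k converges in the strong operator topology to I − P_Ω. Moreover, for each i ∈ ℤ and every ξ ∈ F_m, a_i a_i† ξ = ξ − ∑_{k ≤ i} a_k† a_k ξ (the family (a_k† a_k ξ)_{k ≤ i} being summable). -/
open scoped InnerProductSpace ComplexOrder
open ContinuousLinearMap Filter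

noncomputable section

/-- The orthogonal projection `P_Ω` of `F_m` onto `ℂΩ`, `ξ ↦ ⟪Ω, ξ⟫ Ω`. -/
noncomputable def Pom : Fm →L[ℂ] Fm := (innerSL ℂ (e ∅)).smulRight (e ∅)

/-! Every operator involved is a coordinate projection in the basis `e A`: `a_k† a_k` keeps exactly
the `e A` with `min A = k`, `P_Ω` keeps `e ∅`, and `a_i a_i†` keeps the `e A` with `i < min A`.
Coordinate projections onto pairwise disjoint index sets sum strongly to the coordinate projection
onto their union, and the level sets `{A | min A = k}` partition the nonempty finite sets when
`k` ranges over `ℤ`, and the finite sets with `min A ≤ i` when `k` ranges over `k ≤ i`. -/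

namespace Finset

variable {α : Type*} [LinearOrder α]

theorem min_eq_coe_iff {s : Finset α} {a : α} : s.min = a ↔ a ∈ s ∧ ∀ b ∈ s, a ≤ b := by
  refine ⟨fun h => ⟨mem_of_min h, fun b hb => min_le_of_eq hb h⟩, fun ⟨ha, hmin⟩ => ?_⟩
  exact le_antisymm (min_le ha) (Finset.le_min fun b hb => WithTop.coe_le_coe.mpr (hmin b hb))

theorem coe_lt_min_iff {s : Finset α} {a : α} : (a : WithTop α) < s.min ↔ ∀ b ∈ s, a < b := by
  refine ⟨fun h b hb => WithTop.coe_lt_coe.mp (h.trans_le (min_le hb)), fun h => ?_⟩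
  rcases s.eq_empty_or_nonempty with rfl | hs
  · simp
  · obtain ⟨m, hm⟩ := min_of_nonempty hs
    rw [hm, WithTop.coe_lt_coe]
    exact h m (mem_of_min hm)

end Finset

namespace lp

open Function
open scoped Classical

section NormedField

variable {ι 𝕜 : Type*} [NormedField 𝕜] [DecidableEq ι] {p : ENNReal} [Fact (1 ≤ p)]

def IsCoordinateProjection (T : lp (fun _ : ι => 𝕜) p →L[𝕜] lp (fun _ : ι => 𝕜) p)
    (s : Set ι) : Prop :=
  ∀ i, T (lp.single p i 1) = if i ∈ s then lp.single p i 1 else 0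

variable {T : lp (fun _ : ι => 𝕜) p →L[𝕜] lp (fun _ : ι => 𝕜) p} {s : Set ι}

theorem IsCoordinateProjection.apply_single (hT : IsCoordinateProjection T s) (i : ι) (c : 𝕜) :
    T (lp.single p i c) = if i ∈ s then lp.single p i c else 0 := by
  have hc : lp.single p i c = c • lp.single (E := fun _ : ι => 𝕜) p i 1 := by
    rw [← lp.single_smul, smul_eq_mul, mul_one]
  rw [hc, map_smul, hT i]
  split_ifs <;> simp

theorem IsCoordinateProjection.id_sub (hT : IsCoordinateProjection T s) :
    IsCoordinateProjection (ContinuousLinearMap.id 𝕜 _ - T) sᶜ := by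
  intro i
  rw [sub_apply, ContinuousLinearMap.id_apply, hT i]
  by_cases hi : i ∈ s <;> simp [hi]

theorem IsCoordinateProjection.hasSum (hT : IsCoordinateProjection T s) (hp : p ≠ ⊤)
    (f : lp (fun _ : ι => 𝕜) p) : HasSum (fun i : s => lp.single p (i : ι) (f i)) (T f) := by
  rw [← Function.comp_def (fun i => lp.single p i (f i)), hasSum_subtype_iff_indicator]
  convert T.hasSum (lp.hasSum_single hp f) using 2 with i
  rw [hT.apply_single, Set.indicator_apply]

theorem IsCoordinateProjection.hasSum_iUnion {κ : Type*} {t : κ → Set ι}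
    {T : κ → lp (fun _ : ι => 𝕜) p →L[𝕜] lp (fun _ : ι => 𝕜) p}
    {R : lp (fun _ : ι => 𝕜) p →L[𝕜] lp (fun _ : ι => 𝕜) p}
    (hT : ∀ k, IsCoordinateProjection (T k) (t k)) (ht : Pairwise (Disjoint on t))
    (hR : IsCoordinateProjection R (⋃ k, t k)) (hp : p ≠ ⊤) (f : lp (fun _ : ι => 𝕜) p) :
    HasSum (fun k => T k f) (R f) := by
  have hsigma := (Equiv.ofBijective _ (Set.sigmaToiUnion_bijective t ht)).hasSum_iff.mpr
    (hR.hasSum hp f)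
  exact hsigma.sigma fun k => (hT k).hasSum hp f

end NormedField

theorem isCoordinateProjection_innerSL_smulRight_single {ι 𝕜 : Type*} [RCLike 𝕜] [DecidableEq ι]
    (i : ι) :
    IsCoordinateProjection ((innerSL 𝕜 (lp.single 2 i (1 : 𝕜))).smulRight (lp.single 2 i 1))
      {i} := by
  intro j
  simp only [smulRight_apply, innerSL_apply_apply, lp.inner_single_left, lp.single_apply,
    Set.mem_singleton_iff]
  by_cases hj : j = i
  · subst hj
    simp
  · simp [hj, Ne.symm hj]

end lp

open lp

theorem isCoordinateProjection_of_apply_e {T : Fm →L[ℂ] Fm} {P : Finset ℤ → Prop}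
    [DecidablePred P] (hT : ∀ A, T (e A) = if P A then e A else 0) :
    IsCoordinateProjection T {A | P A} := fun A => by
  change T (e A) = _
  rw [hT]
  congr

variable {a adag : ℤ → (Fm →L[ℂ] Fm)}

theorem isCoordinateProjection_create_comp_annihilate (ha : AnnihilatesOn a)
    (hadag : CreatesOn adag) (k : ℤ) :
    IsCoordinateProjection (adag k ∘L a k) {A | A.min = k} := by
  refine isCoordinateProjection_of_apply_e fun A => ?_
  simp only [Finset.min_eq_coe_iff]
  rw [comp_apply, ha]
  split_ifs with h
  · rw [hadag, if_pos, Finset.insert_erase h.1]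
    intro j hj
    exact (h.2 j (Finset.mem_of_mem_erase hj)).lt_of_ne (Finset.ne_of_mem_erase hj).symm
  · simp

theorem isCoordinateProjection_annihilate_comp_create (ha : AnnihilatesOn a)
    (hadag : CreatesOn adag) (i : ℤ) :
    IsCoordinateProjection (a i ∘L adag i) {A | (i : WithTop ℤ) < A.min} := by
  refine isCoordinateProjection_of_apply_e fun A => ?_
  simp only [Finset.coe_lt_min_iff]
  rw [comp_apply, hadag]
  split_ifs with h
  · rw [ha, if_pos, Finset.erase_insert fun hi => (h i hi).false]
    refine ⟨Finset.mem_insert_self i A, fun j hj => ?_⟩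
    rcases Finset.mem_insert.mp hj with rfl | hj
    exacts [le_rfl, (h j hj).le]
  · simp

theorem iUnion_setOf_min_eq : ⋃ k : ℤ, {A : Finset ℤ | A.min = k} = {∅}ᶜ := by
  ext A
  rw [Set.mem_iUnion, Set.mem_compl_singleton_iff, ← Finset.min_eq_top.ne,
    WithTop.ne_top_iff_exists]
  simp only [Set.mem_ofPred_eq, eq_comm]

theorem iUnion_setOf_min_eq_of_le (i : ℤ) :
    ⋃ k : {k : ℤ // k ≤ i}, {A : Finset ℤ | A.min = k} = {A | (i : WithTop ℤ) < A.min}ᶜ := by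
  ext A
  simp [WithTop.le_coe_iff, and_comm]

open Function in
theorem pairwise_disjoint_setOf_min_eq {κ : Type*} {g : κ → ℤ} (hg : g.Injective) :
    Pairwise (Disjoint on fun k => {A : Finset ℤ | A.min = g k}) :=
  (pairwise_disjoint_fiber Finset.min).comp_of_injective (WithTop.coe_injective.comp hg)

/-- For every `ξ ∈ F_m` the family `(a_k† a_k ξ)_{k ∈ ℤ}` is summable with sum
`ξ − ⟨ξ, Ω⟩ Ω` (so the net of finite partial sums of `∑ₖ a_k† a_k` converges strongly
to `I − P_Ω`); moreover, for each `i ∈ ℤ` and `ξ ∈ F_m`, the family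
`(a_k† a_k ξ)_{k ≤ i}` is summable and `a_i a_i† ξ = ξ − ∑_{k ≤ i} a_k† a_k ξ`. -/
theorem monotone_number_operator_sum
    (a adag : ℤ → (Fm →L[ℂ] Fm))
    (ha : AnnihilatesOn a) (hadag : CreatesOn adag) :
    (∀ ξ : Fm, HasSum (fun k : ℤ => adag k (a k ξ)) (ξ - Pom ξ)) ∧
    (∀ (i : ℤ) (ξ : Fm),
      HasSum (fun k : {k : ℤ // k ≤ i} => adag k.1 (a k.1 ξ)) (ξ - a i (adag i ξ))) := by
  refine ⟨fun ξ => ?_, fun i ξ => ?_⟩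
  · have hR := (isCoordinateProjection_innerSL_smulRight_single (𝕜 := ℂ) (∅ : Finset ℤ)).id_sub
    rw [← iUnion_setOf_min_eq] at hR
    exact IsCoordinateProjection.hasSum_iUnion
      (isCoordinateProjection_create_comp_annihilate ha hadag)
      (pairwise_disjoint_setOf_min_eq Function.injective_id) hR (by norm_num) ξ
  · have hR := (isCoordinateProjection_annihilate_comp_create ha hadag i).id_sub
    rw [← iUnion_setOf_min_eq_of_le] at hR
    exact IsCoordinateProjection.hasSum_iUnion
      (T := fun k : {k : ℤ // k ≤ i} => adag k ∘L a k)
      (fun k => isCoordinateProjection_create_comp_annihilate ha hadag k)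
      (pairwise_disjoint_setOf_min_eq Subtype.val_injective) hR (by norm_num) ξ

end
end

section
/- Two λ-forms are equal exactly when their index data coincide: if m, n, m', n' ≥ 0, i_1 < ⋯ < i_m, j_1 > ⋯ > j_n, k_1 < ⋯ < k_{m'}, h_1 > ⋯ > h_{n'} are integers and a†_{i_1}⋯a†_{i_m} a_{j_1}⋯a_{j_n} = a†_{k_1}⋯a†_{k_{m'}} a_{h_1}⋯a_{h_{n'}} as operators on F_m, then m = m', n = n', i_l = k_l for l = 1,…,m and j_l = h_l for l = 1,…,n. -/
open scoped InnerProductSpace ComplexOrder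
open ContinuousLinearMap Filter

noncomputable section

/-- A λ-form: an operator `X = a†_{i_1}⋯a†_{i_m} a_{j_1}⋯a_{j_n}` with
`i_1 < ⋯ < i_m` and `j_1 > ⋯ > j_n` (the identity `I` when `m = n = 0`). -/
def IsLambdaForm (a adag : ℤ → (Fm →L[ℂ] Fm)) (X : Fm →L[ℂ] Fm) : Prop :=
  ∃ is js : List ℤ, is.Chain' (· < ·) ∧ js.Chain' (· > ·) ∧
    X = (is.map adag).prod * (js.map a).prod

/-- A π-form: an operator `X = a†_{i_1}⋯a†_{i_m} a_k a†_k a_{j_1}⋯a_{j_n}` with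
`i_1 < ⋯ < i_m`, `j_1 > ⋯ > j_n`, `k > i_m` and `k > j_1` (equivalently, `k` exceeds
every index occurring in the increasing and decreasing strings). -/
def IsPiForm (a adag : ℤ → (Fm →L[ℂ] Fm)) (X : Fm →L[ℂ] Fm) : Prop :=
  ∃ (is js : List ℤ) (k : ℤ), is.Chain' (· < ·) ∧ js.Chain' (· > ·) ∧
    (∀ i ∈ is, i < k) ∧ (∀ j ∈ js, j < k) ∧
    X = (is.map adag).prod * (a k * adag k) * (js.map a).prod

/-! The λ-form `a†_{i_1}⋯a†_{i_m} a_{j_1}⋯a_{j_n}` maps `e {j_1, …, j_n}` to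
`e {i_1, …, i_m}`, and it kills every `e A` with `{j_1, …, j_n} ⊄ A`. Evaluating two equal
λ-forms on each other's annihilation sets therefore shows that these sets coincide, and then
that the creation sets coincide; a strictly monotone list is determined by its set of entries. -/

lemma e_injective : Function.Injective e := by
  intro A B h
  by_contra hne
  have h_self : e B A = 1 := h ▸ lp.single_apply_self 2 A 1
  exact one_ne_zero (h_self.symm.trans (lp.single_apply_ne 2 B 1 hne))

lemma e_ne_zero (A : Finset ℤ) : e A ≠ 0 := by
  intro h
  have h_self : e A A = 1 := lp.single_apply_self 2 A 1
  simp [h] at h_self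

def lambdaOp (a adag : ℤ → (Fm →L[ℂ] Fm)) (is js : List ℤ) : Fm →L[ℂ] Fm :=
  (is.map adag).prod * (js.map a).prod

variable {a adag : ℤ → (Fm →L[ℂ] Fm)}

lemma CreatesOn.prod_map_apply_vacuum (hadag : CreatesOn adag) {is : List ℤ}
    (his : is.Pairwise (· < ·)) : (is.map adag).prod (e ∅) = e is.toFinset := by
  induction is with
  | nil => simp
  | cons i t ih =>
    obtain ⟨hit, ht⟩ := List.pairwise_cons.mp his
    rw [List.map_cons, List.prod_cons, mul_apply_eq_comp, ih ht, hadag, if_pos,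
      List.toFinset_cons]
    simpa using hit

lemma AnnihilatesOn.prod_map_apply_union (ha : AnnihilatesOn a) {js : List ℤ}
    (hjs : js.Pairwise (· > ·)) {A : Finset ℤ} (hA : ∀ j ∈ js, ∀ x ∈ A, j < x) :
    (js.map a).prod (e (js.toFinset ∪ A)) = e A := by
  induction js generalizing A with
  | nil => simp
  | cons j t ih =>
    obtain ⟨hjt, ht⟩ := List.pairwise_cons.mp hjs
    have hjA : j ∉ A := fun hj => lt_irrefl j (hA j List.mem_cons_self j hj)
    have hA' : ∀ k ∈ t, ∀ x ∈ insert j A, k < x := by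
      intro k hk x hx
      rcases Finset.mem_insert.mp hx with rfl | hx
      exacts [hjt k hk, hA k (List.mem_cons_of_mem j hk) x hx]
    rw [List.map_cons, List.prod_cons, mul_apply_eq_comp, List.toFinset_cons, Finset.insert_union,
      ← Finset.union_insert, ih ht hA', ha, if_pos, Finset.erase_insert hjA]
    refine ⟨Finset.mem_insert_self j A, fun x hx => ?_⟩
    rcases Finset.mem_insert.mp hx with rfl | hx
    exacts [le_rfl, (hA j List.mem_cons_self x hx).le]

lemma AnnihilatesOn.apply_e_of_ne_zero (ha : AnnihilatesOn a) {j : ℤ} {A : Finset ℤ}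
    (h : a j (e A) ≠ 0) : j ∈ A ∧ a j (e A) = e (A.erase j) := by
  rw [ha] at h ⊢
  split_ifs at h ⊢ with hj
  exacts [⟨hj.1, rfl⟩, absurd rfl h]

lemma AnnihilatesOn.prod_map_apply_e_of_ne_zero (ha : AnnihilatesOn a) {js : List ℤ}
    {A : Finset ℤ} (h : (js.map a).prod (e A) ≠ 0) :
    js.toFinset ⊆ A ∧ (js.map a).prod (e A) = e (A \ js.toFinset) := by
  induction js with
  | nil => simp
  | cons j t ih =>
    rw [List.map_cons, List.prod_cons, mul_apply_eq_comp] at h ⊢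
    have ht : (t.map a).prod (e A) ≠ 0 := fun h0 => h (by rw [h0, map_zero])
    obtain ⟨htA, hte⟩ := ih ht
    rw [hte] at h ⊢
    obtain ⟨hjA, hje⟩ := ha.apply_e_of_ne_zero h
    rw [Finset.mem_sdiff] at hjA
    refine ⟨?_, ?_⟩
    · rw [List.toFinset_cons]
      exact Finset.insert_subset hjA.1 htA
    · rw [hje, List.toFinset_cons, Finset.sdiff_insert]

lemma lambdaOp_apply_annihilationSet (ha : AnnihilatesOn a) (hadag : CreatesOn adag)
    {is js : List ℤ} (his : is.Pairwise (· < ·)) (hjs : js.Pairwise (· > ·)) :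
    lambdaOp a adag is js (e js.toFinset) = e is.toFinset := by
  have hkill := ha.prod_map_apply_union hjs (A := ∅) (by simp)
  rw [Finset.union_empty] at hkill
  rw [lambdaOp, mul_apply_eq_comp, hkill, hadag.prod_map_apply_vacuum his]

lemma annihilationSet_subset_of_lambdaOp_apply_ne_zero (ha : AnnihilatesOn a)
    {is js : List ℤ} {A : Finset ℤ} (h : lambdaOp a adag is js (e A) ≠ 0) :
    js.toFinset ⊆ A := by
  refine (ha.prod_map_apply_e_of_ne_zero fun h0 => h ?_).1
  rw [lambdaOp, mul_apply_eq_comp, h0, map_zero]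

lemma annihilationSet_subset_of_lambdaOp_eq (ha : AnnihilatesOn a) (hadag : CreatesOn adag)
    {is js ks hs : List ℤ} (his : is.Pairwise (· < ·)) (hjs : js.Pairwise (· > ·))
    (heq : lambdaOp a adag is js = lambdaOp a adag ks hs) :
    hs.toFinset ⊆ js.toFinset := by
  apply annihilationSet_subset_of_lambdaOp_apply_ne_zero ha (is := ks)
  rw [← heq, lambdaOp_apply_annihilationSet ha hadag his hjs]
  exact e_ne_zero _

/-- Lemma 4.4 (i): two λ-forms are equal exactly when their index data coincide.
Here `is`/`ks` are the (strictly increasing) lists of creation indices and `js`/`hs`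
the (strictly decreasing) lists of annihilation indices; equality of the lists encodes
`m = m'`, `n = n'`, `i_l = k_l` and `j_l = h_l`. -/
theorem lambdaForm_inj
    (a adag : ℤ → (Fm →L[ℂ] Fm))
    (ha : AnnihilatesOn a) (hadag : CreatesOn adag)
    (is js ks hs : List ℤ)
    (h1 : is.Chain' (· < ·)) (h2 : js.Chain' (· > ·))
    (h3 : ks.Chain' (· < ·)) (h4 : hs.Chain' (· > ·))
    (heq : (is.map adag).prod * (js.map a).prod
         = (ks.map adag).prod * (hs.map a).prod) :
    is = ks ∧ js = hs := by
  have p1 := List.isChain_iff_pairwise.mp h1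
  have p2 := List.isChain_iff_pairwise.mp h2
  have p3 := List.isChain_iff_pairwise.mp h3
  have p4 := List.isChain_iff_pairwise.mp h4
  have hannih : js.toFinset = hs.toFinset :=
    (annihilationSet_subset_of_lambdaOp_eq ha hadag p3 p4 heq.symm).antisymm
      (annihilationSet_subset_of_lambdaOp_eq ha hadag p1 p2 heq)
  have hjs : js = hs := p2.eq_of_mem_iff p4 fun x => by
    simpa only [List.mem_toFinset] using Finset.ext_iff.mp hannih x
  subst hjs
  have hcreate : e is.toFinset = e ks.toFinset := by
    rw [← lambdaOp_apply_annihilationSet ha hadag p1 p2,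
      ← lambdaOp_apply_annihilationSet ha hadag p3 p2]
    exact congrArg (fun X => X (e js.toFinset)) heq
  refine ⟨p1.eq_of_mem_iff p3 fun x => ?_, rfl⟩
  simpa only [List.mem_toFinset] using Finset.ext_iff.mp (e_injective hcreate) x

end
end

section
/- For every X ∈ 𝔄_m and every α ∈ ℂ one has ‖X + α I‖ ≥ |α| in operator norm on F_m; consequently the identity operator I does not belong to 𝔄_m. -/
open scoped InnerProductSpace ComplexOrder
open ContinuousLinearMap Filter

noncomputable section

/-- Forms of positive length: λ-forms with `m + n > 0`, together with all π-forms
(which have length `m + n + 2 > 0`). -/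
def IsPositiveLengthForm (a adag : ℤ → (Fm →L[ℂ] Fm)) (X : Fm →L[ℂ] Fm) : Prop :=
  (∃ is js : List ℤ, is.Chain' (· < ·) ∧ js.Chain' (· > ·) ∧ is ++ js ≠ [] ∧
    X = (is.map adag).prod * (js.map a).prod) ∨ IsPiForm a adag X

/-- `𝔄_m`: the norm closure in `B(F_m)` of the linear span of all λ-forms and π-forms
of positive length. -/
def Am (a adag : ℤ → (Fm →L[ℂ] Fm)) : Set (Fm →L[ℂ] Fm) :=
  closure (Submodule.span ℂ
    {X : Fm →L[ℂ] Fm | IsPositiveLengthForm a adag X} : Set (Fm →L[ℂ] Fm))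

/-! Every positive-length form has a rightmost factor `a_j` or `a†_k` that kills `e {m}` once
`m` is below its index, so the forms, and hence their span, lie in the left ideal of operators
killing `e {m}` for all sufficiently negative `m`. Testing `X + α I` on such a unit vector gives
`‖X + α I‖ ≥ |α|`, an inequality that is closed in `X`. -/

theorem Ideal.list_prod_mem {R : Type*} [Semiring R] {I : Ideal R} {l : List R}
    (hl : l ≠ []) (hI : ∀ x ∈ l, x ∈ I) : l.prod ∈ I := by
  obtain ⟨l', x, rfl⟩ := List.eq_nil_or_concat' l |>.resolve_left hl
  rw [List.prod_append, List.prod_singleton]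
  exact I.mul_mem_left _ (hI x (by simp))

section EventualKer

variable {𝕜 E ι : Type*} [NontriviallyNormedField 𝕜] [NormedAddCommGroup E] [NormedSpace 𝕜 E]

variable (𝕜) in
def eventualKer (l : Filter ι) (v : ι → E) : Ideal (E →L[𝕜] E) where
  carrier := {T | ∀ᶠ i in l, T (v i) = 0}
  zero_mem' := by simp
  add_mem' hS hT := (hS.and hT).mono fun i h => by simp [h.1, h.2]
  smul_mem' S T hT := hT.mono fun i h => by simp [h]

theorem norm_le_norm_add_smul_one_of_apply_eq_zero {T : E →L[𝕜] E} {x : E} (hx : ‖x‖ = 1)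
    (hTx : T x = 0) (α : 𝕜) : ‖α‖ ≤ ‖T + α • (1 : E →L[𝕜] E)‖ := by
  simpa [hTx, norm_smul, hx] using (T + α • (1 : E →L[𝕜] E)).le_opNorm x

theorem norm_le_norm_add_smul_one_of_mem_closure_eventualKer {l : Filter ι} [l.NeBot]
    {v : ι → E} (hv : ∀ i, ‖v i‖ = 1) {T : E →L[𝕜] E}
    (hT : T ∈ closure (eventualKer 𝕜 l v : Set (E →L[𝕜] E))) (α : 𝕜) :
    ‖α‖ ≤ ‖T + α • (1 : E →L[𝕜] E)‖ := by
  refine closure_minimal (fun S hS => ?_)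
    (isClosed_le continuous_const (continuous_id.add continuous_const).norm) hT
  obtain ⟨i, hi⟩ := (hS : ∀ᶠ i in l, S (v i) = 0).exists
  exact norm_le_norm_add_smul_one_of_apply_eq_zero (hv i) hi α

end EventualKer

theorem norm_e (A : Finset ℤ) : ‖e A‖ = 1 := by
  simp [e, lp.norm_single]

theorem CreatesOn.mem_eventualKer {adag : ℤ → (Fm →L[ℂ] Fm)} (hadag : CreatesOn adag)
    (i : ℤ) : adag i ∈ eventualKer ℂ atBot fun m => e {m} :=
  (eventually_lt_atBot i).mono fun m hm => by simp [hadag i {m}, hm.not_gt]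

theorem AnnihilatesOn.mem_eventualKer {a : ℤ → (Fm →L[ℂ] Fm)} (ha : AnnihilatesOn a)
    (i : ℤ) : a i ∈ eventualKer ℂ atBot fun m => e {m} :=
  (eventually_lt_atBot i).mono fun m hm => by simp [ha i {m}, hm.ne']

theorem IsPositiveLengthForm.mem_eventualKer {a adag : ℤ → (Fm →L[ℂ] Fm)}
    (ha : AnnihilatesOn a) (hadag : CreatesOn adag) {X : Fm →L[ℂ] Fm}
    (hX : IsPositiveLengthForm a adag X) : X ∈ eventualKer ℂ atBot fun m => e {m} := by
  have prod_mem {f : ℤ → Fm →L[ℂ] Fm} (hf : ∀ i, f i ∈ eventualKer ℂ atBot fun m => e {m})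
      {l : List ℤ} (hl : l ≠ []) : (l.map f).prod ∈ eventualKer ℂ atBot fun m => e {m} :=
    Ideal.list_prod_mem (by simpa using hl) (by simpa using fun i _ => hf i)
  rcases hX with ⟨is, js, -, -, hne, rfl⟩ | ⟨is, js, k, -, -, -, -, rfl⟩
  · rcases eq_or_ne js [] with rfl | hjs
    · simpa using prod_mem hadag.mem_eventualKer (by simpa using hne)
    · exact Ideal.mul_mem_left _ _ (prod_mem ha.mem_eventualKer hjs)
  · rcases eq_or_ne js [] with rfl | hjs
    · simpa [← mul_assoc] using Ideal.mul_mem_left _ _ (hadag.mem_eventualKer k)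
    · exact Ideal.mul_mem_left _ _ (prod_mem ha.mem_eventualKer hjs)

/-- Proposition 4.6 (Proposition `ide`): for every `X ∈ 𝔄_m` and every `α ∈ ℂ` one has
`‖X + α I‖ ≥ |α|`; consequently the identity `I` does not belong to `𝔄_m`. -/
theorem norm_add_smul_one_ge_of_mem_Am
    (a adag : ℤ → (Fm →L[ℂ] Fm))
    (ha : AnnihilatesOn a) (hadag : CreatesOn adag) :
    (∀ X ∈ Am a adag, ∀ α : ℂ, ‖α‖ ≤ ‖X + α • (1 : Fm →L[ℂ] Fm)‖) ∧
    (1 : Fm →L[ℂ] Fm) ∉ Am a adag := by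
  have span_le : Submodule.span ℂ {X | IsPositiveLengthForm a adag X} ≤
      (eventualKer ℂ atBot fun m => e {m}).restrictScalars ℂ :=
    Submodule.span_le.2 fun X hX => hX.mem_eventualKer ha hadag
  have norm_ge : ∀ X ∈ Am a adag, ∀ α : ℂ, ‖α‖ ≤ ‖X + α • (1 : Fm →L[ℂ] Fm)‖ :=
    fun X hX => norm_le_norm_add_smul_one_of_mem_closure_eventualKer (fun m => norm_e {m})
      (closure_mono span_le hX)
  refine ⟨norm_ge, fun h => ?_⟩
  have := norm_ge 1 h (-1)
  norm_num at this

end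
end

section
/- The monotone creation and annihilation operators act irreducibly on F_m: if T is a bounded operator on F_m satisfying T a_i = a_i T and T a_i† = a_i† T for all i ∈ ℤ, then T = c I for some scalar c ∈ ℂ. -/
open scoped InnerProductSpace ComplexOrder
open ContinuousLinearMap Filter

noncomputable section

/-!
If `T` commutes with every `a_i`, then `T Ω` is annihilated by every `a_i`. The coefficient of a
vector `x` at `A ≠ ∅` is the coefficient of `a_j x` at `A \ {j}`, where `j = min A`, so the only
vectors annihilated by all `a_i` are the multiples of `Ω`: `T Ω = c Ω`. Every basis vector is
created from the vacuum, `e_A = a_j† e_{A \ {j}}`, and `T` commutes with the `a_j†`, so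
`T e_A = c e_A` for all `A`, hence `T = c I` by continuity.
-/

namespace Fm

theorem continuousLinearMap_ext_e {F : Type*} [AddCommMonoid F] [Module ℂ F] [TopologicalSpace F]
    [T2Space F] {S R : Fm →L[ℂ] F} (h : ∀ A, S (e A) = R (e A)) : S = R :=
  lp.ext_continuousLinearMap ENNReal.ofNat_ne_top fun A => ContinuousLinearMap.ext_ring (h A)

theorem inner_e_left (A : Finset ℤ) (x : Fm) : ⟪e A, x⟫_ℂ = x A := by
  simp [e, lp.inner_single_left]

theorem inner_e_e (A B : Finset ℤ) : ⟪e A, e B⟫_ℂ = if A = B then 1 else 0 := by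
  rw [inner_e_left, e, lp.single_apply, Pi.single_apply]

theorem e_apply_of_ne {A B : Finset ℤ} (h : B ≠ A) : (e A : Finset ℤ → ℂ) B = 0 :=
  lp.single_apply_ne 2 A 1 h

end Fm

open Fm

theorem Finset.insert_eq_iff_of_forall_lt {α : Type*} [LinearOrder α] {i : α} {A B : Finset α}
    (hB : ∀ j ∈ B, i < j) : insert i B = A ↔ (i ∈ A ∧ ∀ j ∈ A, i ≤ j) ∧ B = A.erase i := by
  constructor
  · rintro rfl
    refine ⟨⟨mem_insert_self i B, fun j hj => ?_⟩, (erase_insert fun h => (hB i h).false).symm⟩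
    rcases mem_insert.mp hj with rfl | hj
    exacts [le_rfl, (hB j hj).le]
  · rintro ⟨⟨hiA, -⟩, rfl⟩
    exact insert_erase hiA

theorem CreatesOn.apply_e_of_forall_lt {adag : ℤ → (Fm →L[ℂ] Fm)} (h : CreatesOn adag)
    {i : ℤ} {B : Finset ℤ} (hB : ∀ j ∈ B, i < j) : adag i (e B) = e (insert i B) := by
  rw [h, if_pos hB]

namespace AnnihilatesOn

variable {a : ℤ → (Fm →L[ℂ] Fm)}

theorem apply_e_empty (h : AnnihilatesOn a) (i : ℤ) : a i (e ∅) = 0 := by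
  rw [h, if_neg (by simp)]

theorem apply_apply_of_forall_lt (h : AnnihilatesOn a) {i : ℤ} {B : Finset ℤ}
    (hB : ∀ j ∈ B, i < j) (x : Fm) : (a i x : Finset ℤ → ℂ) B = x (insert i B) := by
  have key : (innerSL ℂ (e B)).comp (a i) = innerSL ℂ (e (insert i B)) := by
    refine continuousLinearMap_ext_e fun A => ?_
    rw [comp_apply, innerSL_apply_apply, innerSL_apply_apply, h i A, apply_ite (inner ℂ (e B)),
      inner_e_e, inner_e_e, inner_zero_right]
    simp only [Finset.insert_eq_iff_of_forall_lt hB, ite_and]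
  simpa only [comp_apply, innerSL_apply_apply, inner_e_left] using congr($key x)

theorem eq_smul_e_empty (h : AnnihilatesOn a) {x : Fm} (hx : ∀ i, a i x = 0) :
    x = x ∅ • e ∅ := by
  ext A : 2
  induction A using Finset.induction_on_min with
  | empty => simp [e]
  | insert j B hjB _ =>
    rw [lp.coeFn_smul, Pi.smul_apply, e_apply_of_ne (Finset.insert_ne_empty j B),
      smul_zero, ← h.apply_apply_of_forall_lt hjB, hx, lp.coeFn_zero, Pi.zero_apply]

end AnnihilatesOn

theorem CreatesOn.eq_smul_one_of_commute {adag : ℤ → (Fm →L[ℂ] Fm)} (h : CreatesOn adag)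
    {T : Fm →L[ℂ] Fm} (hT : ∀ i, T * adag i = adag i * T) {c : ℂ} (hvac : T (e ∅) = c • e ∅) :
    T = c • (1 : Fm →L[ℂ] Fm) := by
  refine continuousLinearMap_ext_e fun A => ?_
  induction A using Finset.induction_on_min with
  | empty => simpa using hvac
  | insert j B hjB ih =>
    simp only [smul_apply, one_apply_eq_self] at ih ⊢
    rw [← h.apply_e_of_forall_lt hjB, ← mul_apply_eq_comp, hT, mul_apply_eq_comp, ih, map_smul]

/-- Proposition 4.7 (irreducibility, Proposition `vncz`): the monotone creation and
annihilation operators act irreducibly on `F_m`: any bounded operator `T` commuting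
with every `a_i` and every `a_i†` is a scalar multiple of the identity. -/
theorem monotone_irreducible
    (a adag : ℤ → (Fm →L[ℂ] Fm))
    (ha : AnnihilatesOn a) (hadag : CreatesOn adag)
    (T : Fm →L[ℂ] Fm)
    (hTa : ∀ i : ℤ, T * a i = a i * T)
    (hTadag : ∀ i : ℤ, T * adag i = adag i * T) :
    ∃ c : ℂ, T = c • (1 : Fm →L[ℂ] Fm) := by
  have hannih : ∀ i, a i (T (e ∅)) = 0 := fun i => by
    rw [← mul_apply_eq_comp, ← hTa i, mul_apply_eq_comp, ha.apply_e_empty, map_zero]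
  exact ⟨_, hadag.eq_smul_one_of_commute hTadag (ha.eq_smul_e_empty hannih)⟩

end
end

section
/- For the monotone Yang–Baxter operator, 0 ≤ R^{(n)} ≤ I for every n. Equivalently (since R^{(n)} is diagonal in the canonical product basis): define t : ℤ × ℤ → ℝ by t(i, j) = −1 if i ≥ j and t(i, j) = 0 if i < j. Then for every n ≥ 1 and every tuple (i_1, …, i_n) ∈ ℤⁿ, the number r(i_1, …, i_n) := ∑_{j=0}^{n−1} ∏_{k=1}^{j} t(i_k, i_{k+1}) (the j = 0 summand being 1) belongs to {0, 1}. -/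
/-!
Writing `a k = t (x k) (x (k + 1))`, the eigenvalue is the Horner-type expression
`1 + a 0 * (1 + a 1 * (1 + ⋯))`. Since every `a k` is `0` or `-1`, each step of this nesting
maps `{0, 1}` into `{0, 1}`: `1 + 0 * s = 1` and `1 - s ∈ {0, 1}` for `s ∈ {0, 1}`.
-/

open Finset

theorem sum_range_succ_prod_range_eq_one_add_mul {R : Type*} [CommRing R] (a : ℕ → R) (n : ℕ) :
    ∑ j ∈ range (n + 1), ∏ k ∈ range j, a k =
      1 + a 0 * ∑ j ∈ range n, ∏ k ∈ range j, a (k + 1) := by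
  rw [sum_range_succ', prod_range_zero, add_comm, mul_sum]
  simp only [prod_range_succ', mul_comm]

theorem sum_range_prod_range_eq_zero_or_one {R : Type*} [CommRing R] (a : ℕ → R)
    (ha : ∀ k, a k = 0 ∨ a k = -1) (n : ℕ) :
    ∑ j ∈ range n, ∏ k ∈ range j, a k = 0 ∨ ∑ j ∈ range n, ∏ k ∈ range j, a k = 1 := by
  induction n generalizing a with
  | zero => simp
  | succ n ih =>
    rw [sum_range_succ_prod_range_eq_one_add_mul]
    rcases ih (fun k ↦ a (k + 1)) (fun k ↦ ha (k + 1)) with hs | hs <;>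
      rcases ha 0 with h0 | h0 <;> simp [hs, h0]

theorem monotone_R_eigenvalues_mem_zero_one_general
    (t : ℤ → ℤ → ℝ) (ht : ∀ i j : ℤ, t i j = if j ≤ i then -1 else 0)
    (n : ℕ) (x : ℕ → ℤ) :
    (∑ j ∈ Finset.range n, ∏ k ∈ Finset.range j, t (x k) (x (k + 1))) = 0 ∨
    (∑ j ∈ Finset.range n, ∏ k ∈ Finset.range j, t (x k) (x (k + 1))) = 1 := by
  refine sum_range_prod_range_eq_zero_or_one _ (fun k ↦ ?_) n
  rw [ht]
  split_ifs <;> simp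

/-- For the monotone Yang–Baxter operator, `0 ≤ R⁽ⁿ⁾ ≤ I`. Since `R⁽ⁿ⁾` is diagonal in
the canonical product basis with eigenvalue
`r(i_1,…,i_n) = ∑_{j=0}^{n−1} ∏_{k=1}^{j} t(i_k, i_{k+1})` on `e_{i_1} ⊗ ⋯ ⊗ e_{i_n}`,
where `t(i,j) = −1` if `i ≥ j` and `0` if `i < j`, this is equivalent to: for every
`n ≥ 1` and every tuple `(i_1,…,i_n) ∈ ℤⁿ` (formalized as `x : ℕ → ℤ`, `x k = i_{k+1}`),
the eigenvalue `r` belongs to `{0, 1}`. -/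
theorem monotone_R_eigenvalues_mem_zero_one
    (t : ℤ → ℤ → ℝ) (ht : ∀ i j : ℤ, t i j = if j ≤ i then -1 else 0)
    (n : ℕ) (hn : 1 ≤ n) (x : ℕ → ℤ) :
    (∑ j ∈ Finset.range n, ∏ k ∈ Finset.range j, t (x k) (x (k + 1))) = 0 ∨
    (∑ j ∈ Finset.range n, ∏ k ∈ Finset.range j, t (x k) (x (k + 1))) = 1 :=
  monotone_R_eigenvalues_mem_zero_one_general t ht n x
end
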